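/- arXiv:math/0601386 — 2 statements merged into one kernel-verified Lean document; each statement's English description precedes it below -/
import Mathlib

section
/- Fix 1 ≤ k ≤ n and a sign γ, and let D be the associated chain homotopy on I^n. For 1 ≤ q ≤ n, the chains D⟨u_n⟩_{q−1}^+ and −D⟨u_n⟩_{q−1}^− are sums (with coefficient 1) of standard basis elements ∂̌_{i(n−q)}^{α(n−q)}⋯∂̌_{i(1)}^{α(1)} u_q corresponding to precubical operations ∂_{i(1)}^{α(1)}⋯∂_{i(n−q)}^{α(n−q)} complementary to ∂_k^γ. -/
/-!
By Steiner's description of the atoms of the cube, `⟨u_n⟩_p^α` is the sum of the `p`-dimensional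
basis elements whose standard decomposition has constant sign `α` (`extremeChain n p α`). This
is proved by downward induction on `p`: the boundary of the sum of the `(p+1)`-cells of constant
sign `α` is the difference of the two constant-sign sums in dimension `p` (the coefficient of a
`p`-cell telescopes along the position at which its signs are allowed to switch from `α` to
`−α`), and for `p < n` these two sums have disjoint supports, so they are the positive and the
negative part of the boundary. Finally `D` sends a `(q−1)`-cell `τ` of constant sign `α` with
factor `∂^{−γ}` at position `k` to `τ` with that factor replaced by `u₁`, with coefficient exactly
`sgn α`.
-/

namespace CubicalNerve

/-- Signs: `true` is `+`, `false` is `−`, as an integer `±1`. -/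
def sgn (α : Bool) : ℤ := if α then 1 else -1

/-- Sign twisting: `twist α m` is the sign `(−1)^m α`. -/
def twist (α : Bool) (m : ℕ) : Bool := if Even m then α else !α

/-- A standard basis element of the chain complex `Iⁿ`: the factor at position `i` is
`u₁` when the value is `none`, and `∂^α u₁` when the value is `some α`. -/
abbrev Cell (n : ℕ) := Fin n → Option Bool

/-- The dimension of a standard basis element: the number of `u₁` factors. -/
def Cell.dim {n : ℕ} (σ : Cell n) : ℕ := (Finset.univ.filter fun i => σ i = none).card

/-- The number of `u₁` factors strictly before position `i`. -/
def Cell.below {n : ℕ} (σ : Cell n) (i : Fin n) : ℕ :=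
  (Finset.univ.filter fun j => j < i ∧ σ j = none).card

/-- The number of `∂^± u₁` factors at positions `≤ j`. -/
def Cell.sLe {n : ℕ} (σ : Cell n) (j : Fin n) : ℕ :=
  (Finset.univ.filter fun i => i ≤ j ∧ σ i ≠ none).card

/-- The chain groups of `Iⁿ` (all degrees taken together): the free abelian group
on the standard basis elements. -/
abbrev Chain (n : ℕ) := Cell n →₀ ℤ

/-- The boundary of a standard basis element (tensor-product boundary formula). -/
noncomputable def bdCell {n : ℕ} (σ : Cell n) : Chain n :=
  ∑ i ∈ Finset.univ.filter (fun i => σ i = none),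
    ((-1 : ℤ) ^ σ.below i) •
      (Finsupp.single (Function.update σ i (some true)) 1 -
        Finsupp.single (Function.update σ i (some false)) 1)

/-- The boundary operator of `Iⁿ`. -/
noncomputable def bd {n : ℕ} (c : Chain n) : Chain n := c.sum fun σ z => z • bdCell σ

/-- The positive part of a chain. -/
noncomputable def posPart {n : ℕ} (c : Chain n) : Chain n :=
  Finsupp.mapRange (fun z => max z 0) (by simp) c

/-- The negative part of a chain. -/
noncomputable def negPart {n : ℕ} (c : Chain n) : Chain n :=
  Finsupp.mapRange (fun z => max (-z) 0) (by simp) c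

/-- `∂^α`: the positive (resp. negative) part of the boundary. -/
noncomputable def bdp {n : ℕ} (α : Bool) (c : Chain n) : Chain n :=
  if α then posPart (bd c) else negPart (bd c)

/-- The atom `⟨σ⟩`: `atom σ α q` is the chain `⟨σ⟩_q^α = (∂^α)^{p−q} σ` for `q ≤ p = dim σ`,
and `0` for `q > p`. -/
noncomputable def atom {n : ℕ} (σ : Cell n) (α : Bool) (q : ℕ) : Chain n :=
  if q ≤ σ.dim then (bdp α)^[σ.dim - q] (Finsupp.single σ 1) else 0

/-- The augmentation (extended by zero on positive-degree chains). -/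
noncomputable def aug {n : ℕ} (c : Chain n) : ℤ := c.sum fun σ z => if σ.dim = 0 then z else 0

/-- The top basis element `u_n = u₁ ⊗ ⋯ ⊗ u₁` of `Iⁿ`. -/
def un (n : ℕ) : Cell n := fun _ => none

/-- The basis element `u_{k-1} ⊗ ∂^γ u₁ ⊗ u_{n-k}` (here `k : Fin n` is `k−1` in the
1-indexed notation of the paper). -/
def kcell {n : ℕ} (k : Fin n) (γ : Bool) : Cell n := Function.update (un n) k (some γ)

/-- Membership in `ν Iⁿ` for a double sequence `x`, where `x i α` is `x_i^α`:
each `x_i^α` is an `i`-chain which is a nonnegative sum of standard basis elements,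
`ε x_0^- = ε x_0^+ = 1`, and `x_i^+ − x_i^− = ∂ x_{i+1}^- = ∂ x_{i+1}^+`. -/
def IsNu {n : ℕ} (x : ℕ → Bool → Chain n) : Prop :=
  (∀ i α, ∀ σ ∈ (x i α).support, Cell.dim σ = i) ∧
  (∀ i α, 0 ≤ x i α) ∧
  (∀ α, aug (x 0 α) = 1) ∧
  (∀ i α, x i true - x i false = bd (x (i + 1) α))

/-- The double sequence of an atom. -/
noncomputable def atomSeq {n : ℕ} (σ : Cell n) : ℕ → Bool → Chain n := fun i α => atom σ α i

/-- The identity operation `d_p^α` on double sequences. -/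
noncomputable def dOp {n : ℕ} (p : ℕ) (α : Bool) (x : ℕ → Bool → Chain n) : ℕ → Bool → Chain n :=
  fun i β => if i < p then x i β else if i = p then x p α else 0

/-- The composition `x #_p y = x − d_p⁺ x + y`, formed termwise. -/
noncomputable def comp {n : ℕ} (p : ℕ) (x y : ℕ → Bool → Chain n) : ℕ → Bool → Chain n :=
  fun i β => x i β - dOp p true x i β + y i β

/-- Insertion of a new tensor factor at (0-indexed) position `i` (clamped into range). -/
def insertCell {m : ℕ} (i : ℕ) (v : Option Bool) (σ : Cell m) : Cell (m + 1) :=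
  Fin.insertNth ⟨min i m, Nat.lt_succ_of_le (min_le_right i m)⟩ v σ

/-- The face chain map `∂̌_i^α : Iᵐ → Iᵐ⁺¹` (with `i` 1-indexed, `1 ≤ i ≤ m+1`),
given on standard basis elements by `x ⊗ y ↦ x ⊗ ∂^α u₁ ⊗ y`. -/
noncomputable def faceL (m : ℕ) (i : ℕ) (α : Bool) : Chain m →ₗ[ℤ] Chain (m + 1) :=
  Finsupp.lmapDomain ℤ ℤ (insertCell (i - 1) (some α))

/-- `IsFaceComposite F` means that `F` is a composite of face chain maps `∂̌_i^α`. -/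
inductive IsFaceComposite : ∀ {m n : ℕ}, (Chain m →ₗ[ℤ] Chain n) → Prop
  | id (m : ℕ) : IsFaceComposite (LinearMap.id : Chain m →ₗ[ℤ] Chain m)
  | step {m d : ℕ} {F : Chain m →ₗ[ℤ] Chain d} (i : ℕ) (α : Bool)
      (h1 : 1 ≤ i) (h2 : i ≤ d + 1) :
      IsFaceComposite F → IsFaceComposite ((faceL d i α).comp F)

/-- `stdC m p ι a` is the composite `∂̌_{ι 0}^{a 0} ∘ ⋯ ∘ ∂̌_{ι (p-1)}^{a (p-1)} : Iᵐ → Iᵐ⁺ᵖ`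
(so `∂̌_{ι (p-1)}^{a (p-1)}` is applied first). -/
noncomputable def stdC (m : ℕ) :
    (p : ℕ) → (Fin p → ℕ) → (Fin p → Bool) → (Chain m →ₗ[ℤ] Chain (m + p))
  | 0, _, _ => LinearMap.id
  | p + 1, ι, a =>
      (faceL (m + p) (ι 0) (a 0)).comp (stdC m p (fun r => ι r.succ) (fun r => a r.succ))

/-- Transport of chains along an equality of dimensions. -/
noncomputable def chainCongr {a b : ℕ} (h : a = b) : Chain a ≃ₗ[ℤ] Chain b :=
  Finsupp.domLCongr (Equiv.arrowCongr (finCongr h) (Equiv.refl (Option Bool)))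

/-- The basis element of `I¹` with value `v`. -/
def cellOf (v : Option Bool) : Cell 1 := fun _ => v

/-- The `n`-fold tensor product of chains of `I¹`, as a chain of `Iⁿ`. -/
noncomputable def tens {n : ℕ} (c : Fin n → Chain 1) : Chain n :=
  Finsupp.equivFunOnFinite.symm fun σ => ∏ j, (c j) (cellOf (σ j))

/-- `τ` has an "extreme" standard decomposition of constant sign `ε`: for its `r`-th
factor `∂_{i}^{α}` (`r`, `i` 1-indexed), `(−1)^{i−r} α = ε`. -/
def ExtremeSign {n : ℕ} (τ : Cell n) (ε : ℤ) : Prop :=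
  ∀ (j : Fin n) (α : Bool), τ j = some α →
    (-1 : ℤ) ^ ((j : ℕ) + 1 + τ.sLe j) * sgn α = ε

/-- The basis element `τ` corresponds to a precubical operation complementary to
`∂_{k+1}^γ` (with `k : Fin n`, i.e. `k+1` in the paper's 1-indexing): its standard
decomposition has no factor at position `k`, and inserting `∂_{k+1}^{−γ}` produces
a standard decomposition of constant sign. -/
def CellCompl {n : ℕ} (k : Fin n) (γ : Bool) (τ : Cell n) : Prop :=
  τ k = none ∧ ∃ ε : ℤ, ExtremeSign (Function.update τ k (some (!γ))) ε

/-- The chain homotopy `D` associated to the face `∂_{k+1}^γ` (0-indexed `k : Fin n`). -/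
noncomputable def Dfun {n : ℕ} (k : Fin n) (γ : Bool) (c : Chain n) : Chain n :=
  c.sum fun τ z =>
    if τ k = some (!γ) then
      (z * (-((-1 : ℤ) ^ Cell.below τ k * sgn γ))) •
        Finsupp.single (Function.update τ k (none : Option Bool)) 1
    else 0

/-- The double sequence `A_q^β` of Proposition 6.4. -/
noncomputable def Aseq {n : ℕ} (k : Fin n) (γ : Bool) (q : ℕ) (β : Bool) :
    ℕ → Bool → Chain n :=
  fun i α =>
    if i + 1 < q then atom (un n) α i
    else if i + 1 = q then
      (if α = β then atom (un n) β i
       else atom (un n) β i - bd (Dfun k γ (atom (un n) β i)))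
    else if i = q then sgn β • Dfun k γ (atom (un n) β (q - 1))
    else 0

/-- The elements `A_q` of Proposition 6.5, defined inductively from the `A_q^β` by
`A_0 = ⟨σ⟩` and `A_q = A_q^− #_{q−1} A_{q−1} #_{q−1} A_q^+`. -/
noncomputable def Aq {n : ℕ} (k : Fin n) (γ : Bool) : ℕ → (ℕ → Bool → Chain n)
  | 0 => atomSeq (kcell k γ)
  | q + 1 => comp q (comp q (Aseq k γ (q + 1) false) (Aq k γ q)) (Aseq k γ (q + 1) true)

lemma sgn_injective : Function.Injective sgn := by
  intro α β; cases α <;> cases β <;> simp [sgn]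

lemma sgn_twist (β : Bool) (m : ℕ) : sgn (twist β m) = (-1) ^ m * sgn β := by
  rcases Nat.even_or_odd m with h | h <;>
    cases β <;> simp [twist, sgn, h, h.neg_one_pow, Nat.not_even_iff_odd.mpr]

lemma twist_succ (β : Bool) (m : ℕ) : twist β (m + 1) = !twist β m := by
  by_cases h : Even m <;> simp [twist, h, Nat.even_add_one]

lemma twist_add_two_mul (β : Bool) (m l : ℕ) : twist β (m + 2 * l) = twist β m := by
  simp [twist, Nat.even_add]

lemma update_eq_iff_update_eq {ι β : Type*} [DecidableEq ι] {f g : ι → β} {a : ι} {b : β} :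
    Function.update f a b = g ↔ g a = b ∧ Function.update g a (f a) = f := by
  constructor
  · rintro rfl
    simp
  · rintro ⟨hg, h⟩
    funext i
    by_cases hi : i = a
    · subst hi
      simp [hg]
    · rw [Function.update_of_ne hi, ← h, Function.update_of_ne hi]

namespace Cell

variable {n : ℕ}

lemma dim_le (σ : Cell n) : σ.dim ≤ n :=
  (Finset.card_filter_le _ _).trans_eq (Finset.card_fin n)

lemma dim_eq_iff_eq_un (σ : Cell n) : σ.dim = n ↔ σ = un n := by
  classical
  have h := Finset.card_filter_eq_iff (s := Finset.univ) (p := fun i : Fin n => σ i = none)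
  simp only [Finset.card_univ, Fintype.card_fin, Finset.mem_univ, true_implies] at h
  rw [dim, h, funext_iff]
  simp [un]

lemma dim_update_none {σ : Cell n} {j : Fin n} (hj : σ j ≠ none) :
    Cell.dim (Function.update σ j none) = σ.dim + 1 := by
  classical
  have : (Finset.univ.filter fun i => Function.update σ j none i = none) =
      insert j (Finset.univ.filter fun i => σ i = none) := by
    ext i
    by_cases hi : i = j <;> simp [hi, Function.update_of_ne]
  rw [dim, dim, this, Finset.card_insert_of_notMem (by simp [hj])]

lemma below_update_of_le (σ : Cell n) {i j : Fin n} (v : Option Bool) (h : i ≤ j) :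
    Cell.below (Function.update σ j v) i = σ.below i := by
  unfold below
  congr 1
  refine Finset.filter_congr fun x _ => ?_
  by_cases hx : x < i
  · rw [Function.update_of_ne (hx.trans_le h).ne]
  · simp [hx]

lemma below_update_none_of_lt {σ : Cell n} {i j : Fin n} (hj : σ j ≠ none) (h : j < i) :
    Cell.below (Function.update σ j none) i = σ.below i + 1 := by
  classical
  have : (Finset.univ.filter fun x => x < i ∧ Function.update σ j none x = none) =
      insert j (Finset.univ.filter fun x => x < i ∧ σ x = none) := by
    ext x
    by_cases hx : x = j <;> simp [hx, h, Function.update_of_ne]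
  rw [below, below, this, Finset.card_insert_of_notMem (by simp [hj])]

lemma below_add_sLe {σ : Cell n} {i : Fin n} (hi : σ i ≠ none) :
    σ.below i + σ.sLe i = i + 1 := by
  classical
  have hbelow : σ.below i = ((Finset.Iic i).filter fun x => σ x = none).card := by
    unfold below
    congr 1
    ext x
    by_cases hx : x = i <;> simp [hx, hi, lt_iff_le_and_ne]
  have hsLe : σ.sLe i = ((Finset.Iic i).filter fun x => ¬σ x = none).card := by
    unfold sLe
    congr 1
    ext x
    simp
  rw [hbelow, hsLe, Finset.card_filter_add_card_filter_not, Fin.card_Iic]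

/-- The sign `(−1)^{i−r} α` of a factor of the standard decomposition only depends on the parity
of the number of `u₁` factors before it. -/
lemma extremeSign_sgn_iff (τ : Cell n) (ε : Bool) :
    ExtremeSign τ (sgn ε) ↔ ∀ i β, τ i = some β → twist β (τ.below i) = ε := by
  refine forall_congr' fun i => forall_congr' fun β => imp_congr_right fun hi => ?_
  have hparity : (i : ℕ) + 1 + τ.sLe i = τ.below i + 2 * τ.sLe i := by
    have := below_add_sLe (σ := τ) (i := i) (by simp [hi])
    omega
  rw [hparity, ← sgn_twist, twist_add_two_mul]
  exact sgn_injective.eq_iff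

end Cell

section Boundary

variable {n : ℕ}

noncomputable def bdTerm (c : Chain n) (σ : Cell n) (j : Fin n) : ℤ :=
  match σ j with
  | none => 0
  | some β => sgn (twist β (σ.below j)) * c (Function.update σ j none)

lemma bdTerm_of_none {c : Chain n} {σ : Cell n} {j : Fin n} (h : σ j = none) :
    bdTerm c σ j = 0 := by
  simp [bdTerm, h]

lemma bdTerm_of_some {c : Chain n} {σ : Cell n} {j : Fin n} {β : Bool} (h : σ j = some β) :
    bdTerm c σ j = sgn (twist β (σ.below j)) * c (Function.update σ j none) := by
  simp [bdTerm, h]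

lemma bdTerm_add (f g : Chain n) (σ : Cell n) (j : Fin n) :
    bdTerm (f + g) σ j = bdTerm f σ j + bdTerm g σ j := by
  rcases h : σ j with _ | β
  · simp [bdTerm_of_none h]
  · simp [bdTerm_of_some h, mul_add]

lemma bdTerm_single (τ σ : Cell n) (b : ℤ) (j : Fin n) :
    bdTerm (Finsupp.single τ b) σ j =
      if τ j = none then
        b * (-1) ^ τ.below j * (Finsupp.single (Function.update τ j (some true)) 1 σ -
          Finsupp.single (Function.update τ j (some false)) 1 σ)
      else 0 := by
  rcases hσ : σ j with _ | β
  · have : ∀ x, Function.update τ j (some x) ≠ σ := fun x h => by simpa [hσ] using congrFun h j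
    simp [bdTerm_of_none hσ, this]
  rw [bdTerm_of_some hσ, Finsupp.single_apply]
  by_cases h : τ = Function.update σ j none
  · subst h
    rw [Cell.below_update_of_le σ _ le_rfl, sgn_twist]
    cases β <;> simp [sgn, Finsupp.single_apply, hσ] <;> ring
  · have : ∀ x, τ j = none → Function.update τ j (some x) ≠ σ := fun x hτ hτσ =>
      h ((update_eq_iff_update_eq.mp hτσ).2 ▸ hτ ▸ rfl)
    by_cases hτ : τ j = none <;> simp [h, hτ, this]

lemma bd_apply (c : Chain n) (σ : Cell n) : bd c σ = ∑ j, bdTerm c σ j := by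
  have hbd : ∀ c : Chain n, bd c = Finsupp.linearCombination ℤ bdCell c :=
    fun c => (Finsupp.linearCombination_apply ℤ c).symm
  induction c using Finsupp.induction_linear with
  | zero =>
    refine (Finset.sum_eq_zero fun j _ => ?_).symm
    rcases h : σ j with _ | β
    · exact bdTerm_of_none h
    · simp [bdTerm_of_some h]
  | add f g hf hg =>
    simp only [hbd, map_add, Finsupp.add_apply, bdTerm_add, Finset.sum_add_distrib] at *
    rw [hf, hg]
  | single τ b =>
    simp only [hbd, Finsupp.linearCombination_single, Finsupp.smul_apply, bdCell,
      Finsupp.finsetSum_apply, Finset.sum_filter, bdTerm_single, smul_eq_mul, Finset.mul_sum]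
    refine Finset.sum_congr rfl fun j _ => ?_
    split_ifs <;> simp [Finsupp.smul_apply, mul_assoc]

end Boundary

section ExtremeChain

variable {n : ℕ}

open Classical in
noncomputable def indicatorChain (P : Cell n → Prop) : Chain n :=
  Finsupp.equivFunOnFinite.symm fun τ => if P τ then 1 else 0

lemma indicatorChain_apply (P : Cell n → Prop) [DecidablePred P] (τ : Cell n) :
    indicatorChain P τ = if P τ then 1 else 0 := by
  simp only [indicatorChain, Finsupp.coe_equivFunOnFinite_symm]
  congr

lemma indicatorChain_apply_eq_zero_or_one (P : Cell n → Prop) (τ : Cell n) :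
    indicatorChain P τ = 0 ∨ indicatorChain P τ = 1 := by
  classical
  rw [indicatorChain_apply]
  split_ifs <;> simp

lemma indicatorChain_apply_ne_zero {P : Cell n → Prop} {τ : Cell n}
    (h : indicatorChain P τ ≠ 0) : P τ := by
  classical
  rw [indicatorChain_apply] at h
  by_contra hP
  simp [hP] at h

noncomputable def extremeChain (n p : ℕ) (α : Bool) : Chain n :=
  indicatorChain fun τ => τ.dim = p ∧ ExtremeSign τ (sgn α)

def Cell.SplitSign (σ : Cell n) (α : Bool) (m : ℕ) : Prop :=
  ∀ i β, σ i = some β → twist β (σ.below i) = if (i : ℕ) < m then α else !α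

namespace Cell

lemma splitSign_zero_iff (σ : Cell n) (α : Bool) :
    σ.SplitSign α 0 ↔ ExtremeSign σ (sgn !α) := by
  simp [SplitSign, extremeSign_sgn_iff]

lemma splitSign_self_iff (σ : Cell n) (α : Bool) :
    σ.SplitSign α n ↔ ExtremeSign σ (sgn α) := by
  simp [SplitSign, extremeSign_sgn_iff]

lemma splitSign_succ_iff_of_none {σ : Cell n} {j : Fin n} (hj : σ j = none) (α : Bool) :
    σ.SplitSign α (j + 1) ↔ σ.SplitSign α j := by
  refine forall_congr' fun i => forall_congr' fun β => imp_congr_right fun hi => ?_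
  have : (i : ℕ) ≠ j := fun h => by simp [Fin.ext h, hj] at hi
  rw [if_congr (show (i : ℕ) < j + 1 ↔ (i : ℕ) < j by omega) rfl rfl]

lemma extremeSign_update_none_iff {σ : Cell n} {j : Fin n} (hj : σ j ≠ none) (α : Bool) :
    ExtremeSign (Function.update σ j none) (sgn α) ↔
      ∀ i ≠ j, ∀ β, σ i = some β → twist β (σ.below i) = if (i : ℕ) < j then α else !α := by
  rw [extremeSign_sgn_iff]
  refine forall_congr' fun i => ?_
  by_cases hij : i = j
  · simp [hij]
  rw [Function.update_of_ne hij]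
  simp only [hij, ne_eq, not_false_eq_true, true_implies]
  rcases lt_or_gt_of_ne hij with hlt | hgt
  · simp [below_update_of_le σ none hlt.le, Fin.lt_def.mp hlt]
  · simp [below_update_none_of_lt hj hgt, twist_succ, not_lt.mpr (Fin.le_def.mp hgt.le)]

lemma splitSign_iff_of_some {σ : Cell n} {j : Fin n} {β : Bool} (hj : σ j = some β)
    (α : Bool) {m : ℕ} (hjm : j ≤ m) (hmj : m ≤ j + 1) :
    σ.SplitSign α m ↔ ExtremeSign (Function.update σ j none) (sgn α) ∧
      twist β (σ.below j) = if (j : ℕ) < m then α else !α := by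
  have hm : ∀ i : Fin n, i ≠ j → ((i : ℕ) < m ↔ (i : ℕ) < j) := fun i hi => by
    have := Fin.val_ne_of_ne hi
    omega
  rw [extremeSign_update_none_iff (by simp [hj])]
  constructor
  · intro h
    refine ⟨fun i hi β' hβ' => ?_, h j β hj⟩
    rw [h i β' hβ', if_congr (hm i hi) rfl rfl]
  · rintro ⟨h, hβ⟩ i β' hβ'
    by_cases hi : i = j
    · subst hi
      obtain rfl := Option.some_inj.mp (hβ'.symm.trans hj)
      simpa using hβ
    · rw [h i hi β' hβ', if_congr (hm i hi).symm rfl rfl]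

end Cell

open Classical in
lemma bdTerm_extremeChain (p : ℕ) (α : Bool) (σ : Cell n) (j : Fin n) :
    bdTerm (extremeChain n (p + 1) α) σ j =
      sgn α * ((if σ.dim = p ∧ σ.SplitSign α (j + 1) then 1 else 0) -
        (if σ.dim = p ∧ σ.SplitSign α j then 1 else 0)) := by
  rcases hj : σ j with _ | β
  · simp [bdTerm_of_none hj, Cell.splitSign_succ_iff_of_none hj]
  rw [bdTerm_of_some hj, extremeChain, indicatorChain_apply,
    Cell.dim_update_none (by simp [hj]), Cell.splitSign_iff_of_some hj α le_rfl (by omega),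
    Cell.splitSign_iff_of_some hj α (by omega) le_rfl]
  simp only [Nat.add_right_cancel_iff, lt_add_one, lt_irrefl, if_true, if_false]
  by_cases h : σ.dim = p ∧ ExtremeSign (Function.update σ j none) (sgn α)
  · simp only [h, and_self, true_and, if_true]
    cases twist β (σ.below j) <;> cases α <;> simp [sgn]
  · simp [h, ← and_assoc]

lemma bd_extremeChain (p : ℕ) (α : Bool) :
    bd (extremeChain n (p + 1) α) = extremeChain n p true - extremeChain n p false := by
  classical
  ext σ
  let g : ℕ → ℤ := fun m => if σ.dim = p ∧ σ.SplitSign α m then 1 else 0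
  calc bd (extremeChain n (p + 1) α) σ
      = ∑ m ∈ Finset.range n, sgn α * (g (m + 1) - g m) := by
        rw [bd_apply, ← Fin.sum_univ_eq_sum_range (fun m => sgn α * (g (m + 1) - g m))]
        exact Finset.sum_congr rfl fun j _ => bdTerm_extremeChain p α σ j
    _ = sgn α * (g n - g 0) := by rw [← Finset.mul_sum, Finset.sum_range_sub]
    _ = _ := by
        simp only [g, Cell.splitSign_self_iff, Cell.splitSign_zero_iff, Finsupp.sub_apply,
          extremeChain, indicatorChain_apply]
        cases α <;> simp [sgn]

end ExtremeChain

section Atoms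

variable {n : ℕ}

lemma posPart_sub_of_disjoint {x y : Chain n} (hx : 0 ≤ x) (hy : 0 ≤ y)
    (h : ∀ σ, x σ = 0 ∨ y σ = 0) : posPart (x - y) = x := by
  ext σ
  have := hx σ
  have := hy σ
  rcases h σ with h | h <;> simp [posPart, h] <;> omega

lemma negPart_sub_of_disjoint {x y : Chain n} (hx : 0 ≤ x) (hy : 0 ≤ y)
    (h : ∀ σ, x σ = 0 ∨ y σ = 0) : negPart (x - y) = y := by
  ext σ
  have := hx σ
  have := hy σ
  rcases h σ with h | h <;> simp [negPart, h] <;> omega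

lemma extremeChain_nonneg (p : ℕ) (α : Bool) : 0 ≤ extremeChain n p α := fun σ => by
  classical
  rw [extremeChain, indicatorChain_apply]
  split_ifs <;> simp

lemma extremeChain_disjoint {p : ℕ} (hp : p < n) (σ : Cell n) :
    extremeChain n p true σ = 0 ∨ extremeChain n p false σ = 0 := by
  classical
  simp only [extremeChain, indicatorChain_apply, ite_eq_right_iff, one_ne_zero, imp_false,
    ← not_and_or]
  rintro ⟨⟨hdim, htrue⟩, -, hfalse⟩
  obtain ⟨i, hi⟩ : ∃ i, σ i ≠ none := by
    by_contra! h
    have := (Cell.dim_eq_iff_eq_un σ).mpr (funext h)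
    omega
  obtain ⟨β, hβ⟩ := Option.ne_none_iff_exists'.mp hi
  rw [Cell.extremeSign_sgn_iff] at htrue hfalse
  have := (htrue i β hβ).symm.trans (hfalse i β hβ)
  simp at this

lemma bdp_extremeChain {p : ℕ} (hp : p < n) (α : Bool) :
    bdp α (extremeChain n (p + 1) α) = extremeChain n p α := by
  cases α <;>
    simp [bdp, bd_extremeChain, posPart_sub_of_disjoint, negPart_sub_of_disjoint,
      extremeChain_nonneg, extremeChain_disjoint hp]

lemma extremeChain_self (α : Bool) : extremeChain n n α = Finsupp.single (un n) 1 := by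
  classical
  ext τ
  simp only [extremeChain, indicatorChain_apply, Finsupp.single_apply, Cell.dim_eq_iff_eq_un,
    @eq_comm _ (un n)]
  by_cases h : τ = un n
  · subst h
    simp [ExtremeSign, un]
  · simp [h]

lemma extremeChain_of_lt {p : ℕ} (hp : n < p) (α : Bool) : extremeChain n p α = 0 := by
  classical
  ext τ
  have := τ.dim_le
  simp [extremeChain, indicatorChain_apply]
  omega

lemma iterate_bdp_single_un (α : Bool) {d : ℕ} (hd : d ≤ n) :
    (bdp α)^[d] (Finsupp.single (un n) 1) = extremeChain n (n - d) α := by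
  induction d with
  | zero => exact (extremeChain_self α).symm
  | succ d ih =>
    rw [Function.iterate_succ_apply', ih (by omega), show n - d = n - (d + 1) + 1 by omega,
      bdp_extremeChain (by omega)]

lemma atom_un (α : Bool) (p : ℕ) : atom (un n) α p = extremeChain n p α := by
  rw [atom, (Cell.dim_eq_iff_eq_un _).mpr rfl]
  split_ifs with hp
  · rw [iterate_bdp_single_un α (Nat.sub_le n p), Nat.sub_sub_self hp]
  · exact (extremeChain_of_lt (by omega) α).symm

end Atoms

section Homotopy

variable {n : ℕ}

structure IsFaceHomotopy (k : Fin n) (γ : Bool) (D : Chain n →ₗ[ℤ] Chain n) : Prop where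
  apply_of_none : ∀ τ : Cell n, τ k = none → D (Finsupp.single τ 1) = 0
  apply_of_same : ∀ τ : Cell n, τ k = some γ → D (Finsupp.single τ 1) = 0
  apply_of_opposite : ∀ τ : Cell n, τ k = some (!γ) →
    D (Finsupp.single τ 1) =
      (-((-1 : ℤ) ^ Cell.below τ k * sgn γ)) •
        Finsupp.single (Function.update τ k (none : Option Bool)) 1

variable {k : Fin n} {γ : Bool} {D : Chain n →ₗ[ℤ] Chain n}

lemma IsFaceHomotopy.apply_single (hD : IsFaceHomotopy k γ D) (τ σ : Cell n) (b : ℤ) :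
    D (Finsupp.single τ b) σ =
      if σ k = none then
        sgn (twist (!γ) (σ.below k)) * Finsupp.single τ b (Function.update σ k (some !γ))
      else 0 := by
  have hne : ∀ x, τ k ≠ some x → τ ≠ Function.update σ k (some x) := fun x hx h =>
    hx (by simp [h])
  rw [← Finsupp.smul_single_one, map_smul, Finsupp.smul_apply, Finsupp.smul_apply,
    Finsupp.single_apply, smul_eq_mul, smul_eq_mul]
  rcases hτ : τ k with _ | β
  · simp [hD.apply_of_none τ hτ, hne (!γ) (by simp [hτ])]
  by_cases hβ : β = γ
  · rw [hβ] at hτ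
    simp [hD.apply_of_same τ hτ, hne (!γ) (by simp [hτ])]
  rw [show β = !γ by cases β <;> cases γ <;> simp_all] at hτ
  rw [hD.apply_of_opposite τ hτ, Finsupp.smul_apply, Finsupp.single_apply]
  by_cases h : Function.update τ k none = σ
  · subst h
    rw [Cell.below_update_of_le τ _ le_rfl, sgn_twist]
    cases γ <;> simp [hτ, sgn, mul_comm]
  · have : σ k = none → τ ≠ Function.update σ k (some !γ) := fun hσ hστ =>
      h (by rw [hστ, Function.update_idem, ← hσ, Function.update_eq_self])
    by_cases hσ : σ k = none <;> simp [h, hσ, this]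

lemma IsFaceHomotopy.apply (hD : IsFaceHomotopy k γ D) (c : Chain n) (σ : Cell n) :
    D c σ = if σ k = none then sgn (twist (!γ) (σ.below k)) * c (Function.update σ k (some !γ))
      else 0 := by
  induction c using Finsupp.induction_linear with
  | zero => simp
  | add f g hf hg =>
    rw [map_add, Finsupp.add_apply, hf, hg]
    split_ifs <;> simp [mul_add]
  | single τ b => exact hD.apply_single τ σ b

lemma IsFaceHomotopy.apply_extremeChain (hD : IsFaceHomotopy k γ D) {q : ℕ} (hq : 1 ≤ q)
    (α : Bool) :
    D (extremeChain n (q - 1) α) = sgn α • indicatorChain fun σ =>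
      σ k = none ∧ σ.dim = q ∧ ExtremeSign (Function.update σ k (some !γ)) (sgn α) := by
  classical
  ext σ
  rw [hD.apply, Finsupp.smul_apply, indicatorChain_apply, extremeChain, indicatorChain_apply]
  by_cases hσ : σ k = none
  · set τ : Cell n := Function.update σ k (some !γ)
    have hdim : σ.dim = τ.dim + 1 := by
      rw [← Cell.dim_update_none (j := k) (by simp [τ]), Function.update_idem, ← hσ,
        Function.update_eq_self]
    by_cases hτ : ExtremeSign τ (sgn α)
    · have hsign := (Cell.extremeSign_sgn_iff τ α).mp hτ k (!γ) (by simp [τ])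
      rw [Cell.below_update_of_le σ _ le_rfl] at hsign
      simp [hσ, hτ, hsign, hdim]
      omega
    · simp [hτ]
  · simp [hσ]

end Homotopy

theorem homotopy_of_top_atom_is_sum_of_complementary_cells_general (n : ℕ) (k : Fin n) (γ : Bool)
    (D : Chain n →ₗ[ℤ] Chain n)
    (hD0 : ∀ τ : Cell n, τ k = none → D (Finsupp.single τ 1) = 0)
    (hD1 : ∀ τ : Cell n, τ k = some γ → D (Finsupp.single τ 1) = 0)
    (hD2 : ∀ τ : Cell n, τ k = some (!γ) →
      D (Finsupp.single τ 1) =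
        (-((-1 : ℤ) ^ Cell.below τ k * sgn γ)) •
          Finsupp.single (Function.update τ k (none : Option Bool)) 1)
    (q : ℕ) (hq1 : 1 ≤ q) :
    (∀ τ : Cell n,
      (D (atom (un n) true (q - 1))) τ = 0 ∨ (D (atom (un n) true (q - 1))) τ = 1) ∧
    (∀ τ : Cell n, (D (atom (un n) true (q - 1))) τ ≠ 0 →
      Cell.dim τ = q ∧ CellCompl k γ τ) ∧
    (∀ τ : Cell n,
      (-(D (atom (un n) false (q - 1)))) τ = 0 ∨
        (-(D (atom (un n) false (q - 1)))) τ = 1) ∧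
    (∀ τ : Cell n, (-(D (atom (un n) false (q - 1)))) τ ≠ 0 →
      Cell.dim τ = q ∧ CellCompl k γ τ) := by
  have hD : IsFaceHomotopy k γ D := ⟨hD0, hD1, hD2⟩
  have hpos := hD.apply_extremeChain hq1 true
  have hneg := congrArg Neg.neg (hD.apply_extremeChain hq1 false)
  simp only [sgn, if_true, Bool.false_eq_true, if_false, one_smul, neg_smul, neg_neg] at hpos hneg
  rw [atom_un, atom_un, hpos, hneg]
  exact ⟨indicatorChain_apply_eq_zero_or_one _,
    fun τ hτ => have h := indicatorChain_apply_ne_zero hτ; ⟨h.2.1, h.1, _, h.2.2⟩,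
    indicatorChain_apply_eq_zero_or_one _,
    fun τ hτ => have h := indicatorChain_apply_ne_zero hτ; ⟨h.2.1, h.1, _, h.2.2⟩⟩

/-- for `1 ≤ k ≤ n` (here `k : Fin n`, 0-indexed), a sign `γ` and the
associated chain homotopy `D`, and for `1 ≤ q ≤ n`: the chains `D⟨u_n⟩_{q−1}^+` and
`−D⟨u_n⟩_{q−1}^−` are sums, with coefficient 1, of standard basis elements
`∂̌_{i(n−q)}^{α(n−q)} ⋯ ∂̌_{i(1)}^{α(1)} u_q` (i.e. `q`-dimensional basis elements)
corresponding to precubical operations complementary to `∂_k^γ`. -/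
theorem homotopy_of_top_atom_is_sum_of_complementary_cells (n : ℕ) (k : Fin n) (γ : Bool)
    (D : Chain n →ₗ[ℤ] Chain n)
    (hD0 : ∀ τ : Cell n, τ k = none → D (Finsupp.single τ 1) = 0)
    (hD1 : ∀ τ : Cell n, τ k = some γ → D (Finsupp.single τ 1) = 0)
    (hD2 : ∀ τ : Cell n, τ k = some (!γ) →
      D (Finsupp.single τ 1) =
        (-((-1 : ℤ) ^ Cell.below τ k * sgn γ)) •
          Finsupp.single (Function.update τ k (none : Option Bool)) 1)
    (q : ℕ) (hq1 : 1 ≤ q) (hq2 : q ≤ n) :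
    (∀ τ : Cell n,
      (D (atom (un n) true (q - 1))) τ = 0 ∨ (D (atom (un n) true (q - 1))) τ = 1) ∧
    (∀ τ : Cell n, (D (atom (un n) true (q - 1))) τ ≠ 0 →
      Cell.dim τ = q ∧ CellCompl k γ τ) ∧
    (∀ τ : Cell n,
      (-(D (atom (un n) false (q - 1)))) τ = 0 ∨
        (-(D (atom (un n) false (q - 1)))) τ = 1) ∧
    (∀ τ : Cell n, (-(D (atom (un n) false (q - 1)))) τ ≠ 0 →
      Cell.dim τ = q ∧ CellCompl k γ τ) :=
  homotopy_of_top_atom_is_sum_of_complementary_cells_general n k γ D hD0 hD1 hD2 q hq1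

end CubicalNerve
end

section
/- Fix 1 ≤ k ≤ n and a sign γ, set σ = u_{k−1}⊗∂^γu_1⊗u_{n−k}, and let A_q^β ∈ νI^n (1 ≤ q ≤ n−1) be the elements defined from D as in the text. Then there are elements A_q ∈ νI^n for 0 ≤ q ≤ n−1 given inductively by A_0 = ⟨σ⟩ and A_q = A_q^− #_{q−1} A_{q−1} #_{q−1} A_q^+ for 1 ≤ q ≤ n−1 (in particular d_{q−1}⁺A_q^− = d_{q−1}⁻A_{q−1} and d_{q−1}⁺A_{q−1} = d_{q−1}⁻A_q^+, so the composites exist), and these satisfy (A_q)_i^α = ⟨u_n⟩_i^α for i < q, (A_q)_q^α = (id − ∂D)⟨u_n⟩_q^α, and (A_q)_i^α = ⟨σ⟩_i^α for i > q. -/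
/-!
The atom `⟨σ⟩_q^α` is the sum of those `q`-faces `ρ` of `σ` that occur with sign `α` in the
boundary of every `(q+1)`-face of `σ` obtained from `ρ` by freeing one coordinate. In this form
`∂⟨σ⟩_{q+1}^β = ⟨σ⟩_q^+ − ⟨σ⟩_q^-` is a telescoping sum over the place where the signs switch,
so atoms lie in `νIⁿ`.

`D` is a chain homotopy `∂D + D∂ = id − φ`, where `φ` retracts `Iⁿ` onto the face `σ`, and
`φ⟨u_n⟩_q^α = ⟨σ⟩_q^α`. Hence, for `q ≥ 1`,
`(id − ∂D)⟨u_n⟩_q^α = ⟨σ⟩_q^α + D⟨u_n⟩_{q−1}^+ − D⟨u_n⟩_{q−1}^-`, whose two `D`-terms are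
nonnegative. The components of `A_q` follow by induction on `q` from the definition of `#`, and
the conditions for `νIⁿ` from these formulas, `∂∂ = 0` and `∂φ = φ∂`.
-/

namespace CubicalNerve

open Finset Function

variable {n : ℕ}

namespace Cell

theorem below_update_self (ρ : Cell n) (i : Fin n) (v : Option Bool) :
    below (update ρ i v) i = ρ.below i := by
  unfold below
  congr 1
  refine filter_congr fun j _ => ?_
  by_cases h : j < i
  · rw [update_of_ne h.ne]
  · simp [h]

theorem below_update_none {ρ : Cell n} {i j : Fin n} (hij : i ≠ j) (hi : ρ i ≠ none) :
    below (update ρ i none) j = ρ.below j + if i < j then 1 else 0 := by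
  unfold below
  split_ifs with hlt
  · rw [← card_insert_of_notMem (s := univ.filter fun j' => j' < j ∧ ρ j' = none) (a := i)
      (by simp [hi])]
    congr 1
    ext j'
    by_cases hj' : j' = i
    · subst hj'; simp [hlt]
    · simp [hj']
  · rw [add_zero]
    congr 1
    refine filter_congr fun j' _ => ?_
    by_cases hj' : j' = i
    · subst hj'; simp [hlt]
    · rw [update_of_ne hj']

theorem below_update_some {ρ : Cell n} {i : Fin n} (hi : ρ i ≠ none) (d : Bool) :
    below (update ρ i (some d)) = ρ.below := by
  ext j
  unfold below
  congr 1
  refine filter_congr fun j' _ => ?_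
  by_cases hj' : j' = i
  · subst hj'; simp [hi]
  · rw [update_of_ne hj']

theorem dim_update_none_s9 {ρ : Cell n} {i : Fin n} (hi : ρ i ≠ none) :
    dim (update ρ i none) = ρ.dim + 1 := by
  unfold dim
  rw [← card_insert_of_notMem (s := univ.filter fun j => ρ j = none) (a := i) (by simp [hi])]
  congr 1
  ext j
  by_cases hj : j = i
  · subst hj; simp
  · simp [hj]

theorem dim_update_some {ρ : Cell n} {i : Fin n} (hi : ρ i = none) (d : Bool) :
    dim (update ρ i (some d)) + 1 = ρ.dim := by
  rw [← dim_update_none_s9 (i := i) (by simp), update_idem, ← hi, update_eq_self]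

theorem dim_update_some_of_ne_none {ρ : Cell n} {i : Fin n} (hi : ρ i ≠ none) (d : Bool) :
    dim (update ρ i (some d)) = ρ.dim := by
  unfold dim
  congr 1
  refine filter_congr fun j _ => ?_
  by_cases hj : j = i
  · subst hj; simp [hi]
  · rw [update_of_ne hj]

theorem dim_eq_zero_iff {ρ : Cell n} : ρ.dim = 0 ↔ ∀ j, ρ j ≠ none := by
  simp [dim, filter_eq_empty_iff]

theorem update_some_eq_iff {τ ρ : Cell n} {i : Fin n} (hτ : τ i = none) (d : Bool) :
    update τ i (some d) = ρ ↔ τ = update ρ i none ∧ ρ i = some d := by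
  constructor
  · rintro rfl
    simp [update_idem, ← hτ]
  · rintro ⟨rfl, h⟩
    rw [update_idem, ← h, update_eq_self]

end Cell

theorem sgn_not (α : Bool) : sgn (!α) = -sgn α := by cases α <;> rfl

theorem sgn_mul_self (α : Bool) : sgn α * sgn α = 1 := by cases α <;> rfl

/-- The coefficient of `ρ` in `∂ (update ρ i none)`; it is `0` when `ρ i = none`. -/
def bdCoeff (ρ : Cell n) (i : Fin n) : ℤ := (-1) ^ ρ.below i * (ρ i).elim 0 sgn

theorem bdCoeff_of_eq_none {ρ : Cell n} {i : Fin n} (h : ρ i = none) : bdCoeff ρ i = 0 := by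
  simp [bdCoeff, h]

theorem bdCoeff_of_eq_some {ρ : Cell n} {i : Fin n} {d : Bool} (h : ρ i = some d) :
    bdCoeff ρ i = (-1) ^ ρ.below i * sgn d := by
  simp [bdCoeff, h]

theorem bdCoeff_update_some_self (ρ : Cell n) (i : Fin n) (d : Bool) :
    bdCoeff (update ρ i (some d)) i = (-1) ^ ρ.below i * sgn d := by
  simp [bdCoeff, Cell.below_update_self]

theorem bdCoeff_update_none {ρ : Cell n} {i j : Fin n} (hij : i ≠ j) (hi : ρ i ≠ none) :
    bdCoeff (update ρ i none) j = (if i < j then -1 else 1) * bdCoeff ρ j := by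
  rw [bdCoeff, bdCoeff, Cell.below_update_none hij hi, update_of_ne hij.symm]
  split_ifs <;> ring

theorem bdCoeff_eq_one_or_eq_neg_one {ρ : Cell n} {i : Fin n} (h : ρ i ≠ none) :
    bdCoeff ρ i = 1 ∨ bdCoeff ρ i = -1 := by
  obtain ⟨d, hd⟩ := Option.ne_none_iff_exists'.1 h
  rcases neg_one_pow_eq_or ℤ (ρ.below i) with h' | h' <;> cases d <;> simp [bdCoeff, hd, h', sgn]

theorem bdCoeff_mul_self {ρ : Cell n} {i : Fin n} (h : ρ i ≠ none) :
    bdCoeff ρ i * bdCoeff ρ i = 1 := by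
  rcases bdCoeff_eq_one_or_eq_neg_one h with h' | h' <;> rw [h'] <;> norm_num

theorem bdCell_apply (τ ρ : Cell n) :
    bdCell τ ρ = ∑ i, if τ = update ρ i none then bdCoeff ρ i else 0 := by
  rw [bdCell, Finsupp.finsetSum_apply, sum_filter]
  refine sum_congr rfl fun i _ => ?_
  by_cases hτ : τ i = none
  · simp only [if_pos hτ, Finsupp.smul_apply, Finsupp.sub_apply, Finsupp.single_apply,
      Cell.update_some_eq_iff hτ]
    by_cases h : τ = update ρ i none
    · subst h
      rw [Cell.below_update_self]
      rcases hρ : ρ i with _ | _ | _ <;> simp [bdCoeff, hρ, sgn]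
    · simp [h]
  · rw [if_neg hτ, if_neg]
    rintro rfl
    simp at hτ

theorem bd_apply_s9 (c : Chain n) (ρ : Cell n) :
    bd c ρ = ∑ i, bdCoeff ρ i * c (update ρ i none) := by
  rw [bd, Finsupp.sum_apply, Finsupp.sum_fintype _ _ (by simp)]
  simp only [Finsupp.smul_apply, smul_eq_mul, bdCell_apply, mul_sum, mul_ite, mul_zero]
  rw [sum_comm]
  refine sum_congr rfl fun i _ => ?_
  rw [sum_ite_eq']
  simp [mul_comm]

theorem bd_eq_linearCombination (c : Chain n) : bd c = Finsupp.linearCombination ℤ bdCell c :=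
  (Finsupp.linearCombination_apply ℤ c).symm

theorem bd_sub (c d : Chain n) : bd (c - d) = bd c - bd d := by
  simp only [bd_eq_linearCombination, map_sub]


theorem Dfun_apply (k : Fin n) (γ : Bool) (c : Chain n) (ρ : Cell n) :
    Dfun k γ c ρ = if ρ k = none then
      bdCoeff (update ρ k (some !γ)) k * c (update ρ k (some !γ)) else 0 := by
  have hsupp : ∀ τ : Cell n, (τ k = some !γ ∧ update τ k none = ρ) ↔
      (ρ k = none ∧ τ = update ρ k (some !γ)) := by
    intro τ
    constructor
    · rintro ⟨h, rfl⟩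
      exact ⟨by simp, by rw [update_idem, ← h, update_eq_self]⟩
    · rintro ⟨h, rfl⟩
      exact ⟨by simp, by rw [update_idem, ← h, update_eq_self]⟩
  rw [Dfun, Finsupp.sum_apply, Finsupp.sum_fintype _ _ (by simp)]
  have hterm : ∀ τ : Cell n, (if τ k = some !γ then
        ((c τ * -((-1) ^ τ.below k * sgn γ)) • Finsupp.single (update τ k none) 1 : Chain n)
        else 0) ρ =
      if ρ k = none ∧ τ = update ρ k (some !γ) then c τ * -((-1) ^ τ.below k * sgn γ) else 0 := by
    intro τ
    by_cases h : ρ k = none ∧ τ = update ρ k (some !γ)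
    · obtain ⟨h1, h2⟩ := (hsupp τ).2 h
      rw [if_pos h1, if_pos h, Finsupp.smul_apply, Finsupp.single_apply, if_pos h2, smul_eq_mul,
        mul_one]
    · rw [if_neg h]
      split_ifs with h1
      · rw [Finsupp.smul_apply, Finsupp.single_apply,
          if_neg fun h2 => h ((hsupp τ).1 ⟨h1, h2⟩), smul_zero]
      · rfl
  simp only [hterm]
  split_ifs with h
  · simp only [h, true_and, sum_ite_eq', mem_univ, if_true, bdCoeff_update_some_self, sgn_not,
      Cell.below_update_self]
    ring
  · simp [h]

theorem Dfun_sub (k : Fin n) (γ : Bool) (c d : Chain n) :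
    Dfun k γ (c - d) = Dfun k γ c - Dfun k γ d := by
  ext ρ
  simp only [Dfun_apply, Finsupp.sub_apply]
  split_ifs <;> ring

theorem Dfun_zero (k : Fin n) (γ : Bool) : Dfun k γ (0 : Chain n) = 0 := by
  ext ρ
  simp [Dfun_apply]

theorem bdCoeff_mul_bdCoeff_update_none {τ : Cell n} {i j : Fin n} (hij : i ≠ j)
    (hi : τ i ≠ none) (hj : τ j ≠ none) :
    bdCoeff τ i * bdCoeff (update τ i none) j = -(bdCoeff τ j * bdCoeff (update τ j none) i) := by
  rw [bdCoeff_update_none hij hi, bdCoeff_update_none hij.symm hj]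
  rcases lt_or_gt_of_ne hij with h | h <;> simp [h, h.not_gt] <;> ring

theorem bdCoeff_update_none_mul_bdCoeff_update_none {τ : Cell n} {i j : Fin n} (hij : i ≠ j)
    (hi : τ i ≠ none) (hj : τ j ≠ none) :
    bdCoeff (update τ j none) i * bdCoeff (update τ i none) j = -(bdCoeff τ j * bdCoeff τ i) := by
  rw [bdCoeff_update_none hij hi, bdCoeff_update_none hij.symm hj]
  rcases lt_or_gt_of_ne hij with h | h <;> simp [h, h.not_gt] <;> ring

theorem bd_bd (c : Chain n) : bd (bd c) = 0 := by
  ext ρ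
  set f : Fin n → Fin n → ℤ := fun i j =>
    bdCoeff ρ i * bdCoeff (update ρ i none) j * c (update (update ρ i none) j none)
  have hanti : ∀ i j, f i j = -f j i := by
    intro i j
    by_cases hij : i = j
    · subst hij
      simp [f, bdCoeff_of_eq_none]
    by_cases hi : ρ i = none
    · have hji : bdCoeff (update ρ j none) i = 0 :=
        bdCoeff_of_eq_none (by rwa [update_of_ne hij])
      simp [f, bdCoeff_of_eq_none hi, hji]
    by_cases hj : ρ j = none
    · have hij' : bdCoeff (update ρ i none) j = 0 :=
        bdCoeff_of_eq_none (by rwa [update_of_ne (Ne.symm hij)])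
      simp [f, bdCoeff_of_eq_none hj, hij']
    simp only [f, update_comm hij]
    linear_combination (c (update (update ρ j none) i none)) *
      bdCoeff_mul_bdCoeff_update_none hij hi hj
  have hsum : ∑ i, ∑ j, f i j = -∑ i, ∑ j, f i j := by
    conv_lhs => rw [sum_comm]
    rw [← sum_neg_distrib]
    exact sum_congr rfl fun j _ => by
      rw [← sum_neg_distrib]
      exact sum_congr rfl fun i _ => hanti i j
  simp only [bd_apply_s9, mul_sum, ← mul_assoc, Finsupp.coe_zero, Pi.zero_apply]
  linarith

/-- `faceProj k γ = id ⊗ (∂^γ u₁ ∘ ε) ⊗ id`, the retraction of `Iⁿ` onto its face `∂_{k+1}^γ`. -/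
noncomputable def faceProj (k : Fin n) (γ : Bool) (c : Chain n) : Chain n :=
  Finsupp.equivFunOnFinite.symm fun ρ =>
    if ρ k = some γ then c ρ + c (update ρ k (some !γ)) else 0

theorem faceProj_apply (k : Fin n) (γ : Bool) (c : Chain n) (ρ : Cell n) :
    faceProj k γ c ρ = if ρ k = some γ then c ρ + c (update ρ k (some !γ)) else 0 := rfl

section Homotopy

variable (k : Fin n) (γ : Bool) (c : Chain n) {ρ : Cell n}

theorem bd_Dfun_add_Dfun_bd_apply_of_eq_none (hρ : ρ k = none) :
    bd (Dfun k γ c) ρ + Dfun k γ (bd c) ρ = c ρ := by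
  obtain ⟨τ, hτ, rfl⟩ : ∃ τ : Cell n, τ k = some !γ ∧ ρ = update τ k none :=
    ⟨update ρ k (some !γ), by simp, by simp [← hρ]⟩
  have hτ' : τ k ≠ none := by simp [hτ]
  have hback : update (update τ k none) k (some !γ) = τ := by
    rw [update_idem, ← hτ, update_eq_self]
  rw [bd_apply_s9, Dfun_apply, if_pos hρ, hback, bd_apply_s9, mul_sum, ← sum_add_distrib,
    sum_eq_single_of_mem k (mem_univ k)]
  · rw [bdCoeff_of_eq_none hρ, zero_mul, zero_add, ← mul_assoc, bdCoeff_mul_self hτ', one_mul]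
  intro i _ hik
  by_cases hi : τ i = none
  · have hi' : update τ k none i = none := by rwa [update_of_ne hik]
    rw [bdCoeff_of_eq_none hi, bdCoeff_of_eq_none hi', zero_mul, zero_mul, mul_zero, add_zero]
  have hswap : update (update (update τ k none) i none) k (some !γ) = update τ i none := by
    rw [update_comm hik, update_idem, ← hτ, update_eq_self]
  rw [Dfun_apply, if_pos (by simp [update_of_ne (Ne.symm hik)]), hswap]
  linear_combination (c (update τ i none)) *
    bdCoeff_update_none_mul_bdCoeff_update_none hik hi hτ'

theorem bd_Dfun_add_Dfun_bd_apply_of_eq_some {d : Bool} (hρ : ρ k = some d) :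
    bd (Dfun k γ c) ρ + Dfun k γ (bd c) ρ = c ρ - faceProj k γ c ρ := by
  rw [Dfun_apply, if_neg (by simp [hρ]), add_zero, bd_apply_s9, sum_eq_single_of_mem k (mem_univ k)]
  · have hpow : ((-1 : ℤ) ^ ρ.below k) * (-1) ^ ρ.below k = 1 := by rw [← mul_pow]; simp
    rw [Dfun_apply, if_pos (by simp), update_idem, bdCoeff_update_some_self,
      bdCoeff_of_eq_some hρ, faceProj_apply]
    by_cases hd : d = γ
    · subst hd
      rw [if_pos hρ, sgn_not]
      linear_combination (-(sgn d * sgn d) * c (update ρ k (some !d))) * hpow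
        - c (update ρ k (some !d)) * sgn_mul_self d
    · have hd' : d = !γ := by cases d <;> cases γ <;> simp_all
      subst hd'
      rw [if_neg (by simp [hρ]), ← hρ, update_eq_self, sgn_not]
      linear_combination (sgn γ * sgn γ * c ρ) * hpow + c ρ * sgn_mul_self γ
  intro i _ hik
  rw [Dfun_apply, if_neg (by simp [update_of_ne (Ne.symm hik), hρ]), mul_zero]

theorem bd_Dfun_add_Dfun_bd : bd (Dfun k γ c) + Dfun k γ (bd c) = c - faceProj k γ c := by
  ext ρ
  rw [Finsupp.add_apply, Finsupp.sub_apply]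
  rcases hρ : ρ k with _ | d
  · rw [bd_Dfun_add_Dfun_bd_apply_of_eq_none k γ c hρ, faceProj_apply, if_neg (by simp [hρ]),
      sub_zero]
  · exact bd_Dfun_add_Dfun_bd_apply_of_eq_some k γ c hρ

end Homotopy

theorem bd_faceProj (k : Fin n) (γ : Bool) (c : Chain n) :
    bd (faceProj k γ c) = faceProj k γ (bd c) := by
  have hφ : ∀ c, faceProj k γ c = c - bd (Dfun k γ c) - Dfun k γ (bd c) := fun c => by
    rw [sub_sub, bd_Dfun_add_Dfun_bd, sub_sub_cancel]
  rw [hφ, hφ, bd_sub, bd_sub, bd_bd, bd_bd, Dfun_zero, sub_zero, sub_zero]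

/-- The sum telescopes: if `C m` says that `s` is `b` on `S` before the cut `m` and `-b` after
it, then the `i`-th summand is `b * ([C (i+1)] - [C i])`. -/
theorem sum_ite_sign_switch (S : Finset (Fin n)) (s : Fin n → ℤ) {b : ℤ} (hb : b ≠ 0)
    (hs : ∀ i ∈ S, s i = b ∨ s i = -b) :
    ∑ i ∈ S, (if (∀ j ∈ S, j < i → s j = b) ∧ (∀ j ∈ S, i < j → s j = -b) then s i else 0) =
      b * ((if ∀ j ∈ S, s j = b then 1 else 0) - if ∀ j ∈ S, s j = -b then 1 else 0) := by
  classical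
  let C : ℕ → Prop := fun m => ∀ j ∈ S, s j = if (j : ℕ) < m then b else -b
  have hcut : ∀ (i : Fin n) (m : ℕ), (i : ℕ) ≤ m → m ≤ i + 1 →
      (C m ↔ (∀ j ∈ S, j < i → s j = b) ∧ (∀ j ∈ S, i < j → s j = -b) ∧
        (i ∈ S → s i = if (i : ℕ) < m then b else -b)) := by
    intro i m him hmi
    constructor
    · intro h
      refine ⟨fun j hj hji => ?_, fun j hj hij => ?_, h i⟩
      · simpa [show (j : ℕ) < m by omega] using h j hj
      · simpa [show ¬(j : ℕ) < m from fun _ => by omega] using h j hj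
    · rintro ⟨hpre, hpost, hi⟩ j hj
      rcases lt_trichotomy j i with hji | rfl | hij
      · simpa [show (j : ℕ) < m by omega] using hpre j hj hji
      · exact hi hj
      · simpa [show ¬(j : ℕ) < m from fun _ => by omega] using hpost j hj hij
  have hstep : ∀ i : Fin n,
      (if i ∈ S then
        (if (∀ j ∈ S, j < i → s j = b) ∧ (∀ j ∈ S, i < j → s j = -b) then s i else 0) else 0) =
      b * ((if C (i + 1) then 1 else 0) - if C i then 1 else 0) := by
    intro i
    simp only [hcut i (i + 1) (by omega) le_rfl, hcut i i le_rfl (by omega)]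
    have hb' : b ≠ -b := by omega
    by_cases hi : i ∈ S
    · rcases hs i hi with h | h
      · simp [hi, h, hb']
      · simp [hi, h, hb'.symm, apply_ite Neg.neg]
    · simp [hi]
  let g : ℕ → ℤ := fun m => if C m then 1 else 0
  calc _ = ∑ i : Fin n, b * (g (i + 1) - g i) := by
        rw [← sum_congr rfl fun i _ => hstep i, sum_ite_mem, univ_inter]
    _ = b * (g n - g 0) := by
        rw [Fin.sum_univ_eq_sum_range (fun m => b * (g (m + 1) - g m)), ← mul_sum, sum_range_sub]
    _ = _ := by simp [g, C]

def IsFace (ρ σ : Cell n) : Prop := ∀ j, σ j ≠ none → ρ j = σ j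

def collapsed (σ ρ : Cell n) : Finset (Fin n) := univ.filter fun j => σ j = none ∧ ρ j ≠ none

theorem mem_collapsed {σ ρ : Cell n} {j : Fin n} :
    j ∈ collapsed σ ρ ↔ σ j = none ∧ ρ j ≠ none := by
  simp [collapsed]

namespace IsFace

variable {ρ σ : Cell n}

theorem eq_none (h : IsFace ρ σ) {j : Fin n} (hj : ρ j = none) : σ j = none := by
  by_contra hσ
  exact hσ (hj ▸ h j hσ).symm

theorem card_collapsed_add_dim (h : IsFace ρ σ) : (collapsed σ ρ).card + ρ.dim = σ.dim := by
  rw [Cell.dim, Cell.dim, collapsed, ← card_filter_add_card_filter_not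
    (s := univ.filter fun j => σ j = none) (fun j => ρ j ≠ none), filter_filter, filter_filter]
  congr 2
  ext j
  simpa using fun hj => h.eq_none hj

theorem eq_of_dim_eq (h : IsFace ρ σ) (hdim : ρ.dim = σ.dim) : ρ = σ := by
  have hS := h.card_collapsed_add_dim
  rw [hdim, Nat.add_eq_right, card_eq_zero] at hS
  funext j
  by_cases hσ : σ j = none
  · rw [hσ]
    by_contra hρ
    have : j ∈ collapsed σ ρ := mem_collapsed.2 ⟨hσ, hρ⟩
    simp [hS] at this
  · exact h j hσ

end IsFace

theorem isFace_update_none_iff {ρ σ : Cell n} {i : Fin n} (hσ : σ i = none) :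
    IsFace (update ρ i none) σ ↔ IsFace ρ σ := by
  refine forall_congr' fun j => imp_congr_right fun hj => ?_
  rw [update_of_ne (by rintro rfl; exact hj hσ)]

/-- `ρ` occurs in the atom `⟨σ⟩_q^α`: it is a `q`-face of `σ` that occurs with sign `α` in the
boundary of each `(q+1)`-face of `σ` obtained from `ρ` by freeing one coordinate. -/
def IsSignedFace (σ : Cell n) (α : Bool) (q : ℕ) (ρ : Cell n) : Prop :=
  IsFace ρ σ ∧ ρ.dim = q ∧ ∀ j ∈ collapsed σ ρ, bdCoeff ρ j = sgn α

open Classical in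
noncomputable def atomChain (σ : Cell n) (α : Bool) (q : ℕ) : Chain n :=
  Finsupp.equivFunOnFinite.symm fun ρ => if IsSignedFace σ α q ρ then 1 else 0

open Classical in
theorem atomChain_apply (σ : Cell n) (α : Bool) (q : ℕ) (ρ : Cell n) :
    atomChain σ α q ρ = if IsSignedFace σ α q ρ then 1 else 0 := rfl

theorem isSignedFace_update_none_iff {σ ρ : Cell n} {i : Fin n} (hi : i ∈ collapsed σ ρ)
    (β : Bool) (q : ℕ) :
    IsSignedFace σ β (q + 1) (update ρ i none) ↔ (IsFace ρ σ ∧ ρ.dim = q) ∧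
      (∀ j ∈ collapsed σ ρ, j < i → bdCoeff ρ j = sgn β) ∧
      (∀ j ∈ collapsed σ ρ, i < j → bdCoeff ρ j = -sgn β) := by
  obtain ⟨hσ, hρ⟩ := mem_collapsed.1 hi
  have hcoll : collapsed σ (update ρ i none) = (collapsed σ ρ).erase i := by
    ext j
    by_cases hj : j = i <;> simp [hj, mem_collapsed]
  rw [IsSignedFace, isFace_update_none_iff hσ, Cell.dim_update_none_s9 hρ, Nat.add_right_cancel_iff,
    hcoll, and_assoc]
  refine and_congr_right fun _ => and_congr_right fun _ => ?_
  constructor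
  · intro h
    refine ⟨fun j hj hji => ?_, fun j hj hij => ?_⟩
    · simpa [bdCoeff_update_none (Ne.symm hji.ne) hρ, hji.not_gt] using
        h j (mem_erase.2 ⟨hji.ne, hj⟩)
    · have := h j (mem_erase.2 ⟨hij.ne', hj⟩)
      rw [bdCoeff_update_none hij.ne hρ, if_pos hij] at this
      linarith
  · rintro ⟨hpre, hpost⟩ j hj
    obtain ⟨hji, hj⟩ := mem_erase.1 hj
    rw [bdCoeff_update_none (Ne.symm hji) hρ]
    rcases lt_or_gt_of_ne hji with h | h
    · simp [h.not_gt, hpre j hj h]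
    · simp [h, hpost j hj h]

theorem bd_atomChain (σ : Cell n) (β : Bool) (q : ℕ) :
    bd (atomChain σ β (q + 1)) = atomChain σ true q - atomChain σ false q := by
  classical
  ext ρ
  have houtside : ∀ i ∉ collapsed σ ρ,
      bdCoeff ρ i * atomChain σ β (q + 1) (update ρ i none) = 0 := by
    intro i hi
    by_cases hρ : ρ i = none
    · rw [bdCoeff_of_eq_none hρ, zero_mul]
    have hσ : σ i ≠ none := fun hσ => hi (mem_collapsed.2 ⟨hσ, hρ⟩)
    rw [atomChain_apply, if_neg, mul_zero]
    exact fun h => hσ (by simpa using (h.1 i hσ).symm)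
  rw [bd_apply_s9, ← sum_subset (subset_univ _) fun i _ hi => houtside i hi, Finsupp.sub_apply]
  simp only [atomChain_apply, mul_ite, mul_one, mul_zero]
  rw [sum_congr rfl fun i hi => if_congr (isSignedFace_update_none_iff hi β q) rfl rfl]
  by_cases hface : IsFace ρ σ ∧ ρ.dim = q
  · simp only [hface, true_and, IsSignedFace]
    rw [sum_ite_sign_switch _ _ (by cases β <;> simp [sgn])
      fun i hi => by cases β <;> simpa [sgn, or_comm] using
        bdCoeff_eq_one_or_eq_neg_one (mem_collapsed.1 hi).2]
    cases β <;> simp [sgn]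
  · have h1 : ∀ α, ¬IsSignedFace σ α q ρ := fun α h => hface ⟨h.1, h.2.1⟩
    simp [hface, h1]

theorem atomChain_of_dim_lt {σ : Cell n} (α : Bool) {q : ℕ} (hq : σ.dim < q) :
    atomChain σ α q = 0 := by
  ext ρ
  rw [atomChain_apply, if_neg, Finsupp.coe_zero, Pi.zero_apply]
  rintro ⟨hface, rfl, -⟩
  have := hface.card_collapsed_add_dim
  omega

theorem atomChain_dim (σ : Cell n) (α : Bool) : atomChain σ α σ.dim = Finsupp.single σ 1 := by
  classical
  ext ρ
  rw [atomChain_apply, Finsupp.single_apply]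
  refine if_congr ⟨fun h => (h.1.eq_of_dim_eq h.2.1).symm, ?_⟩ rfl rfl
  rintro rfl
  exact ⟨fun _ _ => rfl, rfl, fun j hj => by simp [mem_collapsed] at hj⟩

theorem not_isSignedFace_true_and_false {σ : Cell n} {q : ℕ} (hq : q < σ.dim) (ρ : Cell n) :
    ¬(IsSignedFace σ true q ρ ∧ IsSignedFace σ false q ρ) := by
  rintro ⟨⟨hface, rfl, htrue⟩, ⟨-, -, hfalse⟩⟩
  have := hface.card_collapsed_add_dim
  obtain ⟨j, hj⟩ := card_pos.1 (show 0 < (collapsed σ ρ).card by omega)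
  have := (htrue j hj).symm.trans (hfalse j hj)
  simp [sgn] at this

theorem bdp_atomChain {σ : Cell n} (α β : Bool) {q : ℕ} (hq : q < σ.dim) :
    bdp α (atomChain σ β (q + 1)) = atomChain σ α q := by
  ext ρ
  have hnb := not_isSignedFace_true_and_false hq ρ
  cases α <;>
  · simp only [bdp, bd_atomChain, posPart, negPart, Finsupp.mapRange_apply, Finsupp.sub_apply,
      atomChain_apply, Bool.false_eq_true, if_true, if_false]
    split_ifs <;> simp_all

theorem iterate_bdp_single (σ : Cell n) (α : Bool) {m : ℕ} (hm : m ≤ σ.dim) :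
    (bdp α)^[m] (Finsupp.single σ 1) = atomChain σ α (σ.dim - m) := by
  induction m with
  | zero => rw [Function.iterate_zero_apply, Nat.sub_zero, atomChain_dim]
  | succ m ih =>
    have hsucc : σ.dim - m = σ.dim - (m + 1) + 1 := by omega
    rw [Function.iterate_succ_apply', ih (by omega), hsucc, bdp_atomChain α α (by omega)]

theorem atom_eq_atomChain (σ : Cell n) (α : Bool) (q : ℕ) : atom σ α q = atomChain σ α q := by
  rw [atom]
  split_ifs with hq
  · rw [iterate_bdp_single σ α (Nat.sub_le _ _), Nat.sub_sub_self hq]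
  · rw [atomChain_of_dim_lt α (by omega)]

def chainGroup (n m : ℕ) : Submodule ℤ (Chain n) :=
  Finsupp.supported ℤ ℤ {σ : Cell n | σ.dim = m}

theorem mem_chainGroup {c : Chain n} {m : ℕ} :
    c ∈ chainGroup n m ↔ ∀ σ ∈ c.support, σ.dim = m :=
  Finsupp.mem_supported ℤ c

theorem mem_chainGroup' {c : Chain n} {m : ℕ} :
    c ∈ chainGroup n m ↔ ∀ σ, c σ ≠ 0 → σ.dim = m := by
  simp [mem_chainGroup]

theorem dim_add_one_of_bd_apply_ne_zero {c : Chain n} {m : ℕ} (hc : c ∈ chainGroup n m)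
    {ρ : Cell n} (h : bd c ρ ≠ 0) : ρ.dim + 1 = m := by
  rw [bd_apply_s9] at h
  obtain ⟨i, -, hi⟩ := exists_ne_zero_of_sum_ne_zero h
  have hρ : ρ i ≠ none := fun hρ => hi (by rw [bdCoeff_of_eq_none hρ, zero_mul])
  rw [← Cell.dim_update_none_s9 hρ]
  exact mem_chainGroup'.1 hc _ (right_ne_zero_of_mul hi)

theorem bd_mem_chainGroup {c : Chain n} {m : ℕ} (hc : c ∈ chainGroup n (m + 1)) :
    bd c ∈ chainGroup n m :=
  mem_chainGroup'.2 fun _ h => Nat.add_right_cancel (dim_add_one_of_bd_apply_ne_zero hc h)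

theorem bd_eq_zero_of_mem_chainGroup_zero {c : Chain n} (hc : c ∈ chainGroup n 0) : bd c = 0 := by
  ext ρ
  by_contra h
  exact Nat.succ_ne_zero _ (dim_add_one_of_bd_apply_ne_zero hc h)

theorem Dfun_mem_chainGroup (k : Fin n) (γ : Bool) {c : Chain n} {m : ℕ}
    (hc : c ∈ chainGroup n m) : Dfun k γ c ∈ chainGroup n (m + 1) := by
  refine mem_chainGroup'.2 fun ρ h => ?_
  rw [Dfun_apply] at h
  split_ifs at h with hρ
  · rw [← Cell.dim_update_some hρ (!γ), mem_chainGroup'.1 hc _ (right_ne_zero_of_mul h)]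
  · exact absurd rfl h

theorem atomChain_mem_chainGroup (σ : Cell n) (α : Bool) (q : ℕ) :
    atomChain σ α q ∈ chainGroup n q :=
  mem_chainGroup'.2 fun ρ h => by
    rw [atomChain_apply] at h
    split_ifs at h with hρ
    · exact hρ.2.1
    · exact absurd rfl h

theorem atomChain_nonneg (σ : Cell n) (α : Bool) (q : ℕ) : 0 ≤ atomChain σ α q := fun ρ => by
  rw [atomChain_apply]
  split_ifs <;> simp

def vertex (σ : Cell n) (α : Bool) : Cell n := fun j => some ((σ j).getD α)

theorem bdCoeff_of_dim_eq_zero {ρ : Cell n} (h : ρ.dim = 0) (j : Fin n) :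
    bdCoeff ρ j = (ρ j).elim 0 sgn := by
  have hbelow : ρ.below j = 0 := by
    simpa [Cell.below, filter_eq_empty_iff] using fun j' _ => Cell.dim_eq_zero_iff.1 h j'
  rw [bdCoeff, hbelow, pow_zero, one_mul]

theorem isSignedFace_zero_iff {σ : Cell n} {α : Bool} {ρ : Cell n} :
    IsSignedFace σ α 0 ρ ↔ ρ = vertex σ α := by
  have hv : (vertex σ α).dim = 0 := Cell.dim_eq_zero_iff.2 fun j => by simp [vertex]
  constructor
  · rintro ⟨hface, hdim, hsign⟩
    funext j
    by_cases hσ : σ j = none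
    · obtain ⟨d, hd⟩ := Option.ne_none_iff_exists'.1 (Cell.dim_eq_zero_iff.1 hdim j)
      have := hsign j (mem_collapsed.2 ⟨hσ, by simp [hd]⟩)
      rw [bdCoeff_of_dim_eq_zero hdim, hd] at this
      cases d <;> cases α <;> simp_all [vertex, sgn]
    · rw [hface j hσ]
      obtain ⟨d, hd⟩ := Option.ne_none_iff_exists'.1 hσ
      simp [vertex, hd]
  · rintro rfl
    refine ⟨fun j hj => ?_, hv, fun j hj => ?_⟩
    · obtain ⟨d, hd⟩ := Option.ne_none_iff_exists'.1 hj
      simp [vertex, hd]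
    · simp [bdCoeff_of_dim_eq_zero hv, vertex, (mem_collapsed.1 hj).1]

theorem atomChain_zero (σ : Cell n) (α : Bool) :
    atomChain σ α 0 = Finsupp.single (vertex σ α) 1 := by
  classical
  ext ρ
  rw [atomChain_apply, Finsupp.single_apply, if_congr isSignedFace_zero_iff rfl rfl]
  simp [eq_comm]

theorem aug_atomChain_zero (σ : Cell n) (α : Bool) : aug (atomChain σ α 0) = 1 := by
  rw [atomChain_zero, aug, Finsupp.sum_single_index (by simp), if_pos]
  exact Cell.dim_eq_zero_iff.2 fun j => by simp [vertex]

theorem isSignedFace_un_iff {β : Bool} {q : ℕ} {ρ : Cell n} :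
    IsSignedFace (un n) β q ρ ↔ ρ.dim = q ∧ ∀ j, ρ j ≠ none → bdCoeff ρ j = sgn β := by
  simp [IsSignedFace, IsFace, un, mem_collapsed]

theorem isSignedFace_kcell_iff {k : Fin n} {γ β : Bool} {q : ℕ} {ρ : Cell n} :
    IsSignedFace (kcell k γ) β q ρ ↔
      ρ k = some γ ∧ ρ.dim = q ∧ ∀ j ≠ k, ρ j ≠ none → bdCoeff ρ j = sgn β := by
  have hface : IsFace ρ (kcell k γ) ↔ ρ k = some γ := by
    refine ⟨fun h => by simpa [kcell] using h k (by simp [kcell]), fun h j hj => ?_⟩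
    by_cases hjk : j = k
    · subst hjk; simp [kcell, h]
    · simp [kcell, un, hjk] at hj
  have hcoll : ∀ j, j ∈ collapsed (kcell k γ) ρ ↔ j ≠ k ∧ ρ j ≠ none := fun j => by
    by_cases hjk : j = k <;> simp [mem_collapsed, kcell, un, hjk]
  simp only [IsSignedFace, hface, hcoll, and_imp]

theorem faceProj_atomChain_un (k : Fin n) (γ β : Bool) (q : ℕ) :
    faceProj k γ (atomChain (un n) β q) = atomChain (kcell k γ) β q := by
  ext ρ
  rw [faceProj_apply, atomChain_apply, atomChain_apply, atomChain_apply]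
  by_cases hk : ρ k = some γ
  · set ρ' := update ρ k (some !γ) with hρ'
    have hkn : ρ k ≠ none := by simp [hk]
    have hcoeff : ∀ j ≠ k, bdCoeff ρ' j = bdCoeff ρ j := fun j hj => by
      rw [bdCoeff, bdCoeff, hρ', Cell.below_update_some hkn, update_of_ne hj]
    have hcoeff_k : bdCoeff ρ' k = -bdCoeff ρ k := by
      rw [hρ', bdCoeff_update_some_self, bdCoeff_of_eq_some hk, sgn_not, mul_neg]
    have hsplit : ∀ τ : Cell n, τ k ≠ none →
        ((∀ j, τ j ≠ none → bdCoeff τ j = sgn β) ↔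
          bdCoeff τ k = sgn β ∧ ∀ j ≠ k, τ j ≠ none → bdCoeff τ j = sgn β) := fun τ hτ =>
      ⟨fun h => ⟨h k hτ, fun j _ => h j⟩, fun h j hj => by
        by_cases hjk : j = k
        · exact hjk ▸ h.1
        · exact h.2 j hjk hj⟩
    have hrest : (∀ j ≠ k, ρ' j ≠ none → bdCoeff ρ' j = sgn β) ↔
        ∀ j ≠ k, ρ j ≠ none → bdCoeff ρ j = sgn β :=
      forall_congr' fun j => imp_congr_right fun hj => by
        rw [hρ', update_of_ne hj, ← hρ', hcoeff j hj]
    rw [if_pos hk, isSignedFace_un_iff, isSignedFace_un_iff, isSignedFace_kcell_iff,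
      hsplit ρ hkn, hsplit ρ' (by simp [hρ']), hrest, hcoeff_k, hρ',
      Cell.dim_update_some_of_ne_none hkn]
    rcases bdCoeff_eq_one_or_eq_neg_one hkn with h | h <;> cases β <;> simp [h, hk, sgn]
  · rw [if_neg hk, if_neg fun h => hk (isSignedFace_kcell_iff.1 h).1]

theorem smul_Dfun_atomChain_un_nonneg (k : Fin n) (γ β : Bool) (q : ℕ) :
    0 ≤ sgn β • Dfun k γ (atomChain (un n) β q) := fun ρ => by
  simp only [Finsupp.coe_zero, Pi.zero_apply, Finsupp.smul_apply, smul_eq_mul, Dfun_apply,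
    atomChain_apply]
  split_ifs with hρ h
  · rw [(isSignedFace_un_iff.1 h).2 k (by simp), mul_one, sgn_mul_self]
    exact zero_le_one
  all_goals simp

section Atom

variable (σ : Cell n) (α : Bool) (q : ℕ)

theorem atom_mem_chainGroup : atom σ α q ∈ chainGroup n q := by
  rw [atom_eq_atomChain]
  exact atomChain_mem_chainGroup σ α q

theorem atom_nonneg : 0 ≤ atom σ α q := by
  rw [atom_eq_atomChain]
  exact atomChain_nonneg σ α q

theorem aug_atom_zero : aug (atom σ α 0) = 1 := by
  rw [atom_eq_atomChain]
  exact aug_atomChain_zero σ α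

theorem bd_atom : bd (atom σ α (q + 1)) = atom σ true q - atom σ false q := by
  simp only [atom_eq_atomChain, bd_atomChain]

theorem bd_atom_zero : bd (atom σ α 0) = 0 :=
  bd_eq_zero_of_mem_chainGroup_zero (atom_mem_chainGroup σ α 0)

end Atom

section Deformation

variable (k : Fin n) (γ : Bool)

theorem sub_bd_Dfun (c : Chain n) : c - bd (Dfun k γ c) = faceProj k γ c + Dfun k γ (bd c) := by
  have h := bd_Dfun_add_Dfun_bd k γ c
  rw [eq_sub_iff_add_eq] at h
  nth_rewrite 1 [← h]
  abel

theorem faceProj_atom_un (β : Bool) (q : ℕ) :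
    faceProj k γ (atom (un n) β q) = atom (kcell k γ) β q := by
  simp only [atom_eq_atomChain, faceProj_atomChain_un]

theorem atom_un_sub_bd_Dfun_zero (α : Bool) :
    atom (un n) α 0 - bd (Dfun k γ (atom (un n) α 0)) = atom (kcell k γ) α 0 := by
  rw [sub_bd_Dfun, bd_atom_zero, Dfun_zero, add_zero, faceProj_atom_un]

theorem atom_un_sub_bd_Dfun_succ (α : Bool) (q : ℕ) :
    atom (un n) α (q + 1) - bd (Dfun k γ (atom (un n) α (q + 1))) =
      atom (kcell k γ) α (q + 1) + Dfun k γ (atom (un n) true q) -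
        Dfun k γ (atom (un n) false q) := by
  rw [sub_bd_Dfun, bd_atom, Dfun_sub, faceProj_atom_un, add_sub_assoc]

theorem smul_Dfun_atom_un_nonneg (β : Bool) (q : ℕ) :
    0 ≤ sgn β • Dfun k γ (atom (un n) β q) := by
  rw [atom_eq_atomChain]
  exact smul_Dfun_atomChain_un_nonneg k γ β q

theorem atom_un_sub_bd_Dfun_nonneg (α : Bool) (q : ℕ) :
    0 ≤ atom (un n) α q - bd (Dfun k γ (atom (un n) α q)) := by
  cases q with
  | zero => simpa only [atom_un_sub_bd_Dfun_zero] using atom_nonneg _ α 0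
  | succ q =>
    have htrue := smul_Dfun_atom_un_nonneg k γ true q
    have hfalse := smul_Dfun_atom_un_nonneg k γ false q
    rw [sgn, if_pos rfl, one_smul] at htrue
    rw [sgn, if_neg Bool.false_ne_true, neg_one_smul] at hfalse
    rw [atom_un_sub_bd_Dfun_succ, sub_eq_add_neg]
    exact add_nonneg (add_nonneg (atom_nonneg _ α _) htrue) hfalse

theorem atom_un_sub_bd_Dfun_mem_chainGroup (α : Bool) (q : ℕ) :
    atom (un n) α q - bd (Dfun k γ (atom (un n) α q)) ∈ chainGroup n q :=
  sub_mem (atom_mem_chainGroup _ α q)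
    (bd_mem_chainGroup (Dfun_mem_chainGroup k γ (atom_mem_chainGroup _ α q)))

theorem bd_atom_un_sub_bd_Dfun (α : Bool) (q : ℕ) :
    bd (atom (un n) α q - bd (Dfun k γ (atom (un n) α q))) = bd (atom (un n) α q) := by
  rw [bd_sub, bd_bd, sub_zero]

theorem atom_un_sub_bd_Dfun_true_sub_false (α : Bool) (q : ℕ) :
    (atom (un n) true q - bd (Dfun k γ (atom (un n) true q))) -
        (atom (un n) false q - bd (Dfun k γ (atom (un n) false q))) =
      bd (atom (kcell k γ) α (q + 1)) := by
  rw [sub_sub_sub_comm, ← bd_sub, ← Dfun_sub, ← bd_atom _ α, sub_bd_Dfun, bd_bd, Dfun_zero,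
    add_zero, ← bd_faceProj, faceProj_atom_un]

end Deformation

section Composite

variable {p i : ℕ} (x y : ℕ → Bool → Chain n) (β : Bool)

theorem comp_of_lt (h : i < p) : comp p x y i β = y i β := by
  rw [comp, dOp, if_pos h, sub_self, zero_add]

theorem comp_self : comp p x y p β = x p β - x p true + y p β := by
  rw [comp, dOp, if_neg (lt_irrefl p), if_pos rfl]

theorem comp_of_gt (h : p < i) : comp p x y i β = x i β + y i β := by
  rw [comp, dOp, if_neg (by omega), if_neg (by omega), sub_zero]

theorem dOp_eq_dOp {α α' : Bool} (hlt : ∀ i < p, ∀ β, x i β = y i β) (hp : x p α = y p α') :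
    dOp p α x = dOp p α' y := by
  funext i β
  simp only [dOp]
  split_ifs with h₁ h₂
  · exact hlt i h₁ β
  · exact h₂ ▸ hp
  · rfl

end Composite

section Aseq

variable (k : Fin n) (γ : Bool) {q i : ℕ} (β α : Bool)

theorem Aseq_of_lt (h : i + 1 < q) : Aseq k γ q β i α = atom (un n) α i := by
  rw [Aseq, if_pos h]

theorem Aseq_succ_self_same (q : ℕ) : Aseq k γ (q + 1) β q β = atom (un n) β q := by
  rw [Aseq, if_neg (by omega), if_pos rfl, if_pos rfl]

theorem Aseq_succ_self_of_ne (q : ℕ) {β α : Bool} (h : α ≠ β) :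
    Aseq k γ (q + 1) β q α = atom (un n) β q - bd (Dfun k γ (atom (un n) β q)) := by
  rw [Aseq, if_neg (by omega), if_pos rfl, if_neg h]

theorem Aseq_succ_succ (q : ℕ) :
    Aseq k γ (q + 1) β (q + 1) α = sgn β • Dfun k γ (atom (un n) β q) := by
  rw [Aseq, if_neg (by omega), if_neg (by omega), if_pos rfl, Nat.add_sub_cancel]

theorem Aseq_of_gt (h : q < i) : Aseq k γ q β i α = 0 := by
  rw [Aseq, if_neg (by omega), if_neg (by omega), if_neg (by omega)]

end Aseq

theorem Aq_components (k : Fin n) (γ : Bool) (q : ℕ) :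
    (∀ i α, i < q → Aq k γ q i α = atom (un n) α i) ∧
    (∀ α, Aq k γ q q α = atom (un n) α q - bd (Dfun k γ (atom (un n) α q))) ∧
    (∀ i α, q < i → Aq k γ q i α = atom (kcell k γ) α i) := by
  induction q with
  | zero =>
    exact ⟨fun i α h => absurd h (Nat.not_lt_zero i),
      fun α => (atom_un_sub_bd_Dfun_zero k γ α).symm, fun i α _ => rfl⟩
  | succ q ih =>
    obtain ⟨hlt, hself, hgt⟩ := ih
    refine ⟨fun i α hi => ?_, fun α => ?_, fun i α hi => ?_⟩
    · rw [Aq]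
      rcases Nat.lt_succ_iff_lt_or_eq.1 hi with hi | rfl
      · rw [comp_of_lt _ _ _ hi, Aseq_of_lt k γ _ _ (by omega)]
      · rw [comp_self, comp_self, comp_self]
        cases α
        · rw [Aseq_succ_self_same, Aseq_succ_self_of_ne k γ _ (by decide), hself,
            hself, Aseq_succ_self_of_ne k γ _ Bool.false_ne_true]
          abel
        · rw [Aseq_succ_self_of_ne k γ _ (by decide), hself, Aseq_succ_self_same]
          abel
    · rw [Aq, comp_of_gt _ _ _ (by omega), comp_of_gt _ _ _ (by omega), Aseq_succ_succ,
        Aseq_succ_succ, hgt _ _ (by omega), atom_un_sub_bd_Dfun_succ, sgn, sgn, if_pos rfl,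
        if_neg Bool.false_ne_true, one_smul, neg_one_smul]
      abel
    · rw [Aq, comp_of_gt _ _ _ (by omega), comp_of_gt _ _ _ (by omega), Aseq_of_gt k γ _ _ hi,
        Aseq_of_gt k γ _ _ hi, hgt _ _ (by omega), zero_add, add_zero]

section Aq

variable (k : Fin n) (γ : Bool) (q : ℕ)

theorem Aq_mem_chainGroup (i : ℕ) (α : Bool) : Aq k γ q i α ∈ chainGroup n i := by
  obtain ⟨hlt, hself, hgt⟩ := Aq_components k γ q
  rcases lt_trichotomy i q with h | rfl | h
  · exact hlt i α h ▸ atom_mem_chainGroup _ α i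
  · exact hself α ▸ atom_un_sub_bd_Dfun_mem_chainGroup k γ α i
  · exact hgt i α h ▸ atom_mem_chainGroup _ α i

theorem Aq_nonneg (i : ℕ) (α : Bool) : 0 ≤ Aq k γ q i α := by
  obtain ⟨hlt, hself, hgt⟩ := Aq_components k γ q
  rcases lt_trichotomy i q with h | rfl | h
  · exact hlt i α h ▸ atom_nonneg _ α i
  · exact hself α ▸ atom_un_sub_bd_Dfun_nonneg k γ α i
  · exact hgt i α h ▸ atom_nonneg _ α i

theorem aug_Aq_zero (α : Bool) : aug (Aq k γ q 0 α) = 1 := by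
  obtain ⟨hlt, hself, -⟩ := Aq_components k γ q
  rcases q.eq_zero_or_pos with rfl | hq
  · rw [hself, atom_un_sub_bd_Dfun_zero, aug_atom_zero]
  · rw [hlt 0 α hq, aug_atom_zero]

theorem Aq_true_sub_false (i : ℕ) (α : Bool) :
    Aq k γ q i true - Aq k γ q i false = bd (Aq k γ q (i + 1) α) := by
  obtain ⟨hlt, hself, hgt⟩ := Aq_components k γ q
  rcases lt_trichotomy (i + 1) q with h | h | h
  · rw [hlt _ _ (by omega), hlt _ _ (by omega), hlt _ _ h, bd_atom]
  · subst h
    rw [hlt _ _ (by omega), hlt _ _ (by omega), hself, bd_atom_un_sub_bd_Dfun, bd_atom]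
  · rcases (Nat.lt_succ_iff.1 h).eq_or_lt with rfl | h
    · rw [hself, hself, hgt _ _ (by omega), atom_un_sub_bd_Dfun_true_sub_false]
    · rw [hgt _ _ h, hgt _ _ h, hgt _ _ (by omega), bd_atom]

theorem Aq_isNu : IsNu (Aq k γ q) :=
  ⟨fun i α => mem_chainGroup.1 (Aq_mem_chainGroup k γ q i α), Aq_nonneg k γ q,
    aug_Aq_zero k γ q, Aq_true_sub_false k γ q⟩

end Aq

/-- for `1 ≤ k ≤ n` (here `k : Fin n`, 0-indexed) and a sign `γ`, with
`σ = u_{k−1} ⊗ ∂^γ u₁ ⊗ u_{n−k}`, the elements `A_q ∈ ν Iⁿ` (`0 ≤ q ≤ n−1`) defined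
inductively by `A_0 = ⟨σ⟩` and `A_q = A_q^− #_{q−1} A_{q−1} #_{q−1} A_q^+` exist
(in particular `d_{q−1}⁺ A_q^− = d_{q−1}⁻ A_{q−1}` and
`d_{q−1}⁺ A_{q−1} = d_{q−1}⁻ A_q^+`, so the composites are defined) and satisfy
`(A_q)_i^α = ⟨u_n⟩_i^α` for `i < q`, `(A_q)_q^α = (id − ∂D)⟨u_n⟩_q^α`, and
`(A_q)_i^α = ⟨σ⟩_i^α` for `i > q`. -/
theorem Aq_mem_nu_and_components (n : ℕ) (k : Fin n) (γ : Bool) :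
    (∀ q : ℕ, 1 ≤ q → q + 1 ≤ n →
      dOp (q - 1) true (Aseq k γ q false) = dOp (q - 1) false (Aq k γ (q - 1)) ∧
      dOp (q - 1) true (Aq k γ (q - 1)) = dOp (q - 1) false (Aseq k γ q true)) ∧
    (∀ q : ℕ, q + 1 ≤ n →
      IsNu (Aq k γ q) ∧
      (∀ (i : ℕ) (α : Bool), i < q → Aq k γ q i α = atom (un n) α i) ∧
      (∀ α : Bool,
        Aq k γ q q α = atom (un n) α q - bd (Dfun k γ (atom (un n) α q))) ∧
      (∀ (i : ℕ) (α : Bool), q < i → Aq k γ q i α = atom (kcell k γ) α i)) := by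
  refine ⟨fun q hq _ => ?_, fun q _ => ⟨Aq_isNu k γ q, Aq_components k γ q⟩⟩
  obtain ⟨m, rfl⟩ := Nat.exists_eq_add_of_le' hq
  obtain ⟨hlt, hself, -⟩ := Aq_components k γ m
  rw [Nat.add_sub_cancel]
  constructor
  · refine dOp_eq_dOp _ _ (fun i hi β => ?_) ?_
    · rw [Aseq_of_lt k γ _ _ (by omega), hlt i β hi]
    · rw [Aseq_succ_self_of_ne k γ _ (by decide), hself]
  · refine dOp_eq_dOp _ _ (fun i hi β => ?_) ?_
    · rw [hlt i β hi, Aseq_of_lt k γ _ _ (by omega)]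
    · rw [hself, Aseq_succ_self_of_ne k γ _ (by decide)]

end CubicalNerve
end
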